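/- Let (μ, (f_i)) and (μ', (f_i')) be two monic systems on K_N. The associated Cuntz-algebra representations on L²(μ) and L²(μ') are unitarily equivalent if and only if μ and μ' are mutually absolutely continuous and there is a function h with dμ'/dμ = |h|² and f_i' = (h∘σ/h)·f_i for all i ∈ Z_N. -/

import Mathlib

open MeasureTheory ENNReal

noncomputable section

abbrev Word (N : ℕ) := ℕ → Fin N

/-- The left shift `σ` deleting the first letter. -/
def shift {N : ℕ} (ω : Word N) : Word N := fun n => ω (n + 1)

/-- The map `σ_i` prepending the letter `i`. -/
def prepend {N : ℕ} (i : Fin N) (ω : Word N) : Word N :=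
  fun n => match n with
  | 0 => i
  | n + 1 => ω n

/-- The cylinder set determined by a finite word. -/
def cyl {N : ℕ} (w : List (Fin N)) : Set (Word N) :=
  {ω | ∀ k : Fin w.length, ω k = w.get k}

/-!
Write `W` for the intertwiner. The range of the word isometry `S_w` is the space of `L²`
functions supported on the cylinder `[w]` (given one, divide by the filter and pull back
along `σ_w`), so `W` preserves supports on cylinders; summing over the partition of the
space into the cylinders of a fixed length, `W` commutes with multiplication by cylinder
indicators. With `h = W 1` this gives `μ'[w] = ‖1_[w]‖² = ‖1_[w] h‖² = ∫_[w] |h|² dμ`, so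
`μ' = |h|² μ`, and since cylinder indicators span a dense subspace, `W` is multiplication by
`h`. Surjectivity of `W` forces `h ≠ 0` a.e., i.e. `μ ≪ μ'`, and evaluating
`W S'_i 1 = S_i W 1` gives `h f'_i = f_i (h ∘ σ)`. Conversely, multiplication by such an `h`
is a unitary `L²(|h|² μ) → L²(μ)` intertwining the two representations.
-/

theorem ofReal_norm_sq {E : Type*} [SeminormedAddCommGroup E] (z : E) :
    ENNReal.ofReal (‖z‖ ^ 2) = ‖z‖ₑ ^ 2 := by
  rw [ENNReal.ofReal_pow (norm_nonneg _), ofReal_norm]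

namespace MeasureTheory

section Multiplication

variable {α 𝕜 : Type*} [MeasurableSpace α] [RCLike 𝕜] {ν : Measure α} {q : α → 𝕜}

theorem mul_ae_eq_mul_of_ae_eq_withDensity (hq : AEStronglyMeasurable q ν) {a b : α → 𝕜}
    (hab : a =ᵐ[ν.withDensity fun x => ‖q x‖ₑ ^ 2] b) :
    (fun x => q x * a x) =ᵐ[ν] fun x => q x * b x := by
  rw [Filter.EventuallyEq, ae_withDensity_iff' (hq.enorm.pow_const 2)] at hab
  filter_upwards [hab] with x hx
  by_cases h0 : q x = 0
  · simp [h0]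
  · rw [hx (by simpa using h0)]

theorem eLpNorm_withDensity_enorm_sq (hq : AEStronglyMeasurable q ν) {k : α → 𝕜}
    (hk : AEStronglyMeasurable k (ν.withDensity fun x => ‖q x‖ₑ ^ 2)) :
    eLpNorm k 2 (ν.withDensity fun x => ‖q x‖ₑ ^ 2) = eLpNorm (fun x => q x * k x) 2 ν := by
  rw [eLpNorm_congr_ae hk.ae_eq_mk,
    eLpNorm_congr_ae (mul_ae_eq_mul_of_ae_eq_withDensity hq hk.ae_eq_mk),
    eLpNorm_eq_lintegral_rpow_enorm_toReal two_ne_zero ofNat_ne_top,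
    eLpNorm_eq_lintegral_rpow_enorm_toReal two_ne_zero ofNat_ne_top,
    lintegral_withDensity_eq_lintegral_mul₀ (hq.enorm.pow_const 2)
      (hk.stronglyMeasurable_mk.enorm.pow_const _).aemeasurable]
  simp [enorm_mul, mul_pow]

theorem memLp_two_withDensity_enorm_sq_iff (hq : AEStronglyMeasurable q ν) {k : α → 𝕜}
    (hk : AEStronglyMeasurable k (ν.withDensity fun x => ‖q x‖ₑ ^ 2)) :
    MemLp k 2 (ν.withDensity fun x => ‖q x‖ₑ ^ 2) ↔ MemLp (fun x => q x * k x) 2 ν := by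
  have hqk : AEStronglyMeasurable (fun x => q x * k x) ν :=
    (hq.mul hk.stronglyMeasurable_mk.aestronglyMeasurable).congr
      (mul_ae_eq_mul_of_ae_eq_withDensity hq hk.ae_eq_mk).symm
  simp only [MemLp, hk, hqk, true_and, eLpNorm_withDensity_enorm_sq hq hk]

theorem memLp_mul_Lp_withDensity (hq : AEStronglyMeasurable q ν)
    (g : Lp 𝕜 2 (ν.withDensity fun x => ‖q x‖ₑ ^ 2)) : MemLp (fun x => q x * g x) 2 ν :=
  (memLp_two_withDensity_enorm_sq_iff hq (Lp.aestronglyMeasurable g)).1 (Lp.memLp g)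

def withDensityMulLI (hq : AEStronglyMeasurable q ν) :
    Lp 𝕜 2 (ν.withDensity fun x => ‖q x‖ₑ ^ 2) →ₗᵢ[𝕜] Lp 𝕜 2 ν where
  toFun g := (memLp_mul_Lp_withDensity hq g).toLp _
  map_add' g₁ g₂ := by
    rw [← MemLp.toLp_add]
    refine MemLp.toLp_congr _ _ ?_
    filter_upwards [mul_ae_eq_mul_of_ae_eq_withDensity hq (Lp.coeFn_add g₁ g₂)] with x hx
    rw [hx, Pi.add_apply, Pi.add_apply, mul_add]
  map_smul' c g := by
    rw [RingHom.id_apply, ← MemLp.toLp_const_smul]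
    refine MemLp.toLp_congr _ _ ?_
    filter_upwards [mul_ae_eq_mul_of_ae_eq_withDensity hq (Lp.coeFn_smul c g)] with x hx
    simp [hx, mul_left_comm]
  norm_map' g := by
    rw [LinearMap.coe_mk, AddHom.coe_mk, Lp.norm_toLp, Lp.norm_def,
      eLpNorm_withDensity_enorm_sq hq (Lp.aestronglyMeasurable g)]

theorem coeFn_withDensityMulLI (hq : AEStronglyMeasurable q ν)
    (g : Lp 𝕜 2 (ν.withDensity fun x => ‖q x‖ₑ ^ 2)) :
    withDensityMulLI hq g =ᵐ[ν] fun x => q x * g x :=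
  MemLp.coeFn_toLp (memLp_mul_Lp_withDensity hq g)

theorem withDensityMulLI_surjective (hq : AEStronglyMeasurable q ν)
    (hq₀ : ∀ᵐ x ∂ν, q x ≠ 0) :
    Function.Surjective (withDensityMulLI hq) := by
  intro u
  have hk : AEStronglyMeasurable (fun x => u x / q x) (ν.withDensity fun x => ‖q x‖ₑ ^ 2) :=
    ((Lp.aestronglyMeasurable u).aemeasurable.div hq.aemeasurable).aestronglyMeasurable.mono_ac
      (withDensity_absolutelyContinuous _ _)
  have hqk : (fun x => q x * (u x / q x)) =ᵐ[ν] u := by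
    filter_upwards [hq₀] with x hx
    exact mul_div_cancel₀ _ hx
  have hmem := (memLp_two_withDensity_enorm_sq_iff hq hk).2 ((Lp.memLp u).ae_eq hqk.symm)
  refine ⟨hmem.toLp _, Lp.ext ?_⟩
  filter_upwards [coeFn_withDensityMulLI hq (hmem.toLp _),
    mul_ae_eq_mul_of_ae_eq_withDensity hq hmem.coeFn_toLp, hqk] with x h₁ h₂ h₃
  rw [h₁, h₂, h₃]

theorem ae_ne_zero_of_surjective_withDensityMulLI [IsFiniteMeasure ν]
    (hq : AEStronglyMeasurable q ν)
    (h : Function.Surjective (withDensityMulLI hq)) : ∀ᵐ x ∂ν, q x ≠ 0 := by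
  obtain ⟨k, hk⟩ := h (Lp.const 2 ν 1)
  have hone := Lp.coeFn_const (p := 2) (μ := ν) (c := (1 : 𝕜))
  rw [← hk] at hone
  filter_upwards [coeFn_withDensityMulLI hq k, hone] with x h₁ h₂ h₀
  simp [h₀, h₂] at h₁

theorem ae_ne_zero_of_absolutelyContinuous_withDensity (hq : AEStronglyMeasurable q ν)
    (hac : ν ≪ ν.withDensity fun x => ‖q x‖ₑ ^ 2) : ∀ᵐ x ∂ν, q x ≠ 0 :=
  hac.ae_le <| (ae_withDensity_iff' (hq.enorm.pow_const 2)).2 <|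
    ae_of_all _ fun x hx => by simpa using hx

theorem eq_withDensity_enorm_sq_of_rnDeriv {ν₁ : Measure α} [SFinite ν₁] [SigmaFinite ν]
    (hac : ν₁ ≪ ν) (h : ν₁.rnDeriv ν =ᵐ[ν] fun x => ENNReal.ofReal (‖q x‖ ^ 2)) :
    ν₁ = ν.withDensity fun x => ‖q x‖ₑ ^ 2 := by
  rw [← Measure.withDensity_rnDeriv_eq _ _ hac, withDensity_congr_ae h]
  simp only [ofReal_norm_sq]

end Multiplication

section Density

variable {α 𝕜 : Type*} [m : MeasurableSpace α] [RCLike 𝕜] {ν : Measure α}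
  [IsFiniteMeasure ν] {C : Set (Set α)}

theorem Lp.eq_zero_of_forall_setIntegral_eq_zero_of_isPiSystem (hgen : m = .generateFrom C)
    (hC : IsPiSystem C) (huniv : Set.univ ∈ C) (g : Lp 𝕜 2 ν)
    (hg : ∀ s ∈ C, ∫ x in s, g x ∂ν = 0) : g = 0 := by
  have hint : Integrable g ν := (Lp.memLp g).integrable one_le_two
  refine Lp.eq_zero_iff_ae_eq_zero.2
    (hint.ae_eq_zero_of_forall_setIntegral_eq_zero fun s hs _ => ?_)
  induction s, hs using MeasurableSpace.induction_on_inter hgen hC with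
  | empty => simp
  | basic s hs => exact hg s hs
  | compl s hs ih =>
    rw [setIntegral_compl hs hint, ih (measure_lt_top ν s), sub_zero, ← setIntegral_univ,
      hg _ huniv]
  | iUnion f hd hm ih => simp [integral_iUnion hm hd hint.integrableOn, ih]

theorem Lp.ext_on_indicatorConstLp_of_isPiSystem {F : Type*} [NormedAddCommGroup F]
    [NormedSpace 𝕜 F] (hgen : m = .generateFrom C) (hC : IsPiSystem C) (huniv : Set.univ ∈ C)
    {V₁ V₂ : Lp 𝕜 2 ν →L[𝕜] F}
    (h : ∀ s (hs : MeasurableSet s), s ∈ C →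
      V₁ (indicatorConstLp 2 hs (measure_ne_top ν s) 1) =
        V₂ (indicatorConstLp 2 hs (measure_ne_top ν s) 1)) :
    V₁ = V₂ := by
  set T : Set (Lp 𝕜 2 ν) :=
    {f | ∃ s, ∃ hs : MeasurableSet s, s ∈ C ∧
      indicatorConstLp 2 hs (measure_ne_top ν s) 1 = f}
  refine ContinuousLinearMap.ext_on (s := T) ?_ ?_
  · refine Submodule.dense_iff_topologicalClosure_eq_top.2
      (Submodule.topologicalClosure_eq_top_iff.2 ((Submodule.eq_bot_iff _).2 fun g hg => ?_))
    refine Lp.eq_zero_of_forall_setIntegral_eq_zero_of_isPiSystem hgen hC huniv g fun s hs => ?_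
    have hsm : MeasurableSet s := hgen ▸ MeasurableSpace.measurableSet_generateFrom hs
    rw [← L2.inner_indicatorConstLp_one hsm (measure_ne_top ν s)]
    exact (Submodule.mem_orthogonal _ g).1 hg _ (Submodule.subset_span ⟨s, hsm, hs, rfl⟩)
  · rintro _ ⟨s, hs, hsC, rfl⟩
    exact h s hs hsC

end Density

section Isometries

variable {α 𝕜 : Type*} [m : MeasurableSpace α] [RCLike 𝕜] {ν ν' : Measure α}
  {C : Set (Set α)}

theorem eLpNorm_two_sq {E : Type*} [NormedAddCommGroup E] (f : α → E) :
    eLpNorm f 2 ν ^ 2 = ∫⁻ x, ‖f x‖ₑ ^ 2 ∂ν := by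
  simpa using eLpNorm_nnreal_pow_eq_lintegral (f := f) (μ := ν) (p := 2) two_ne_zero

theorem lintegral_enorm_indicator_sq {E : Type*} [NormedAddCommGroup E] {s : Set α}
    (hs : MeasurableSet s) (f : α → E) :
    ∫⁻ x, ‖s.indicator f x‖ₑ ^ 2 ∂ν = ∫⁻ x in s, ‖f x‖ₑ ^ 2 ∂ν := by
  rw [← lintegral_indicator hs]
  congr with x
  by_cases hx : x ∈ s <;> simp [hx]

theorem eq_withDensity_of_map_indicatorConstLp [IsFiniteMeasure ν] [IsFiniteMeasure ν']
    (hgen : m = .generateFrom C) (hC : IsPiSystem C) (huniv : Set.univ ∈ C)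
    (V : Lp 𝕜 2 ν' →ₗᵢ[𝕜] Lp 𝕜 2 ν) {h : α → 𝕜}
    (hV : ∀ s (hs : MeasurableSet s), s ∈ C →
      V (indicatorConstLp 2 hs (measure_ne_top ν' s) 1) =ᵐ[ν] s.indicator h) :
    ν' = ν.withDensity fun x => ‖h x‖ₑ ^ 2 := by
  have key : ∀ s ∈ C, ν' s = ν.withDensity (fun x => ‖h x‖ₑ ^ 2) s := by
    intro s hs
    have hsm : MeasurableSet s := hgen ▸ MeasurableSpace.measurableSet_generateFrom hs
    calc ν' s = eLpNorm (s.indicator fun _ => (1 : 𝕜)) 2 ν' ^ 2 := by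
          simp [eLpNorm_two_sq, lintegral_enorm_indicator_sq hsm]
      _ = eLpNorm (indicatorConstLp 2 hsm (measure_ne_top ν' s) (1 : 𝕜)) 2 ν' ^ 2 := by
          rw [eLpNorm_congr_ae indicatorConstLp_coeFn]
      _ = eLpNorm (s.indicator h) 2 ν ^ 2 := by
          rw [← Lp.enorm_def, ← V.enorm_map, Lp.enorm_def, eLpNorm_congr_ae (hV s hsm hs)]
      _ = ν.withDensity (fun x => ‖h x‖ₑ ^ 2) s := by
          rw [eLpNorm_two_sq, withDensity_apply _ hsm, lintegral_enorm_indicator_sq hsm]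
  exact ext_of_generate_finite C hgen hC key (key _ huniv)

theorem map_indicatorConstLp_ae_eq_of_fibers [IsFiniteMeasure ν'] {ι : Type*} [Fintype ι]
    [MeasurableSpace ι] [MeasurableSingletonClass ι] {p : α → ι} (hp : Measurable p)
    (V : Lp 𝕜 2 ν' →ₗᵢ[𝕜] Lp 𝕜 2 ν)
    (hV : ∀ j (g : Lp 𝕜 2 ν'), (∀ᵐ x ∂ν', p x ≠ j → g x = 0) →
      ∀ᵐ x ∂ν, p x ≠ j → V g x = 0)
    (j : ι) :
    V (indicatorConstLp 2 (hp (measurableSet_singleton j)) (measure_ne_top ν' _) 1) =ᵐ[ν]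
      (p ⁻¹' {j}).indicator (V (Lp.const 2 ν' 1)) := by
  set e : ι → Lp 𝕜 2 ν' := fun k =>
    indicatorConstLp 2 (hp (measurableSet_singleton k)) (measure_ne_top ν' _) 1
  have he : ∀ k, e k =ᵐ[ν'] (p ⁻¹' {k}).indicator 1 := fun k => indicatorConstLp_coeFn
  have hsum : Lp.const 2 ν' (1 : 𝕜) = ∑ k, e k := by
    refine Lp.ext ?_
    filter_upwards [Lp.coeFn_const (p := 2) (μ := ν') (c := (1 : 𝕜)),
      Lp.coeFn_fun_finsetSum Finset.univ e, ae_all_iff.2 he] with x h₁ h₂ h₃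
    rw [h₁, h₂, Finset.sum_eq_single_of_mem (p x) (Finset.mem_univ _) fun k _ hk => ?_, h₃]
    · simp
    · rw [h₃, Set.indicator_of_notMem (by exact Ne.symm hk)]
  have hvan : ∀ k, ∀ᵐ x ∂ν, p x ≠ k → V (e k) x = 0 := fun k => hV k _ (by
    filter_upwards [he k] with x hx hpx
    simp [hx, hpx])
  rw [hsum, map_sum]
  filter_upwards [Lp.coeFn_fun_finsetSum Finset.univ (fun k => V (e k)), ae_all_iff.2 hvan]
    with x h₁ h₂
  by_cases hpx : p x = j
  · rw [Set.indicator_of_mem (by exact hpx), h₁,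
      Finset.sum_eq_single_of_mem j (Finset.mem_univ _) fun k _ hk => h₂ k (hpx.trans_ne hk.symm)]
  · rw [Set.indicator_of_notMem (by exact hpx), h₂ j hpx]

theorem eq_withDensityMulLI_of_map_indicatorConstLp (hgen : m = .generateFrom C)
    (hC : IsPiSystem C) (huniv : Set.univ ∈ C)
    {h : α → 𝕜} (hh : AEStronglyMeasurable h ν)
    [IsFiniteMeasure (ν.withDensity fun x => ‖h x‖ₑ ^ 2)]
    (V : Lp 𝕜 2 (ν.withDensity fun x => ‖h x‖ₑ ^ 2) →ₗᵢ[𝕜] Lp 𝕜 2 ν)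
    (hV : ∀ s (hs : MeasurableSet s), s ∈ C →
      V (indicatorConstLp 2 hs (measure_ne_top _ s) 1) =ᵐ[ν] s.indicator h) :
    V = withDensityMulLI hh := by
  refine LinearIsometry.toContinuousLinearMap_injective
    (Lp.ext_on_indicatorConstLp_of_isPiSystem hgen hC huniv fun s hs hsC => Lp.ext ?_)
  filter_upwards [hV s hs hsC,
    coeFn_withDensityMulLI hh (indicatorConstLp 2 hs (measure_ne_top _ s) 1),
    mul_ae_eq_mul_of_ae_eq_withDensity hh indicatorConstLp_coeFn] with x h₁ h₂ h₃
  simp only [LinearIsometry.coe_toContinuousLinearMap]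
  rw [h₁, h₂, h₃]
  by_cases hx : x ∈ s <;> simp [hx]

end Isometries

end MeasureTheory

section Words

variable {N : ℕ}

theorem measurable_shift : Measurable (shift (N := N)) :=
  measurable_pi_lambda _ fun n => measurable_pi_apply (n + 1)

theorem measurable_prepend (i : Fin N) : Measurable (prepend i) :=
  measurable_pi_lambda _ fun n => by
    cases n with
    | zero => exact measurable_const
    | succ n => exact measurable_pi_apply n

@[simp] theorem shift_prepend (i : Fin N) (x : Word N) : shift (prepend i x) = x := rfl

@[simp] theorem prepend_apply_zero (i : Fin N) (x : Word N) : prepend i x 0 = i := rfl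

theorem prepend_shift {i : Fin N} {x : Word N} (h : x 0 = i) : prepend i (shift x) = x := by
  funext n
  cases n with
  | zero => exact h.symm
  | succ n => rfl

theorem map_shift_map_prepend (ν : Measure (Word N)) (i : Fin N) :
    (ν.map (prepend i)).map shift = ν := by
  rw [Measure.map_map measurable_shift (measurable_prepend i)]
  exact Measure.map_id

@[simp] theorem cyl_nil : cyl ([] : List (Fin N)) = Set.univ := by
  ext x; simp [cyl]

theorem mem_cyl_cons {i : Fin N} {w : List (Fin N)} {x : Word N} :
    x ∈ cyl (i :: w) ↔ x 0 = i ∧ shift x ∈ cyl w := by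
  simp [cyl, Fin.forall_fin_succ, shift]

theorem cyl_eq_preimage (w : List (Fin N)) :
    cyl w = (fun (x : Word N) (k : Fin w.length) => x k) ⁻¹' {w.get} := by
  ext x; simp [cyl, funext_iff]

theorem measurableSet_cyl (w : List (Fin N)) : MeasurableSet (cyl w) := by
  rw [cyl_eq_preimage]
  exact measurable_pi_lambda _ (fun k => measurable_pi_apply _) (measurableSet_singleton _)

theorem cyl_ofFn {n : ℕ} (v : Fin n → Fin N) :
    cyl (List.ofFn v) = (fun (x : Word N) (k : Fin n) => x k) ⁻¹' {v} := by
  ext x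
  simp only [cyl, List.get_ofFn, Set.mem_ofPred_eq, Set.mem_preimage, Set.mem_singleton_iff,
    funext_iff]
  exact ⟨fun h k => by simpa using h ⟨k, by simp⟩, fun h k => h (Fin.cast (by simp) k)⟩

theorem cyl_subset_cyl_of_mem {w v : List (Fin N)} {x : Word N} (hw : x ∈ cyl w)
    (hv : x ∈ cyl v) (hle : v.length ≤ w.length) : cyl w ⊆ cyl v := by
  intro y hy k
  have hk : (k : ℕ) < w.length := k.2.trans_le hle
  rw [hy ⟨k, hk⟩, ← hw ⟨k, hk⟩, hv k]

theorem isPiSystem_range_cyl : IsPiSystem (Set.range (cyl (N := N))) := by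
  rintro _ ⟨w, rfl⟩ _ ⟨v, rfl⟩ ⟨x, hw, hv⟩
  rcases le_total v.length w.length with hle | hle
  · exact ⟨w, (Set.inter_eq_left.2 (cyl_subset_cyl_of_mem hw hv hle)).symm⟩
  · exact ⟨v, (Set.inter_eq_right.2 (cyl_subset_cyl_of_mem hv hw hle)).symm⟩

theorem eq_generateFrom_range_cyl :
    (inferInstance : MeasurableSpace (Word N)) = .generateFrom (Set.range cyl) := by
  refine le_antisymm (iSup_le fun k => ?_)
    (MeasurableSpace.generateFrom_le (Set.forall_mem_range.2 measurableSet_cyl))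
  rintro _ ⟨s, -, rfl⟩
  have hk : (fun x : Word N => x k) ⁻¹' s = ⋃ (w) (_ : ∀ y ∈ cyl w, y k ∈ s), cyl w := by
    refine Set.Subset.antisymm (fun x hx => ?_) (Set.iUnion₂_subset fun _ hw y hy => hw y hy)
    refine Set.mem_biUnion (x := List.ofFn fun n : Fin (k + 1) => x n) ?_ ?_
    · intro y hy
      rw [cyl_ofFn] at hy
      have hyk := congr_fun hy (Fin.last k)
      simp only [Fin.val_last] at hyk
      rwa [hyk]
    · rw [cyl_ofFn]; rfl
  rw [hk]
  exact .iUnion fun w => .iUnion fun _ => .basic _ ⟨w, rfl⟩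

/-- `φ` is the filter of the branch `σ_i`, i.e. `d(ν ∘ σ_i⁻¹)/dν = |φ|²`. -/
structure IsMonicFilter (ν : Measure (Word N)) (i : Fin N) (φ : Word N → ℂ) : Prop where
  aestronglyMeasurable : AEStronglyMeasurable φ ν
  map_prepend : ν.map (prepend i) = ν.withDensity fun x => ‖φ x‖ₑ ^ 2

namespace IsMonicFilter

variable {ν : Measure (Word N)} {i : Fin N} {φ : Word N → ℂ}

theorem of_rnDeriv [IsFiniteMeasure ν] (hφ : AEStronglyMeasurable φ ν)
    (hac : ν.map (prepend i) ≪ ν)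
    (hrn : (ν.map (prepend i)).rnDeriv ν =ᵐ[ν] fun x => ENNReal.ofReal (‖φ x‖ ^ 2)) :
    IsMonicFilter ν i φ :=
  ⟨hφ, eq_withDensity_enorm_sq_of_rnDeriv hac hrn⟩

theorem mul_comp_shift_ae_eq (hφ : IsMonicFilter ν i φ) {a b : Word N → ℂ}
    (hab : a =ᵐ[ν] b) :
    (fun x => φ x * a (shift x)) =ᵐ[ν] fun x => φ x * b (shift x) := by
  refine mul_ae_eq_mul_of_ae_eq_withDensity hφ.aestronglyMeasurable ?_
  rw [← hφ.map_prepend]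
  exact ae_eq_comp measurable_shift.aemeasurable (by rwa [map_shift_map_prepend])

theorem ae_eq_zero_of_ne (hφ : IsMonicFilter ν i φ) :
    ∀ᵐ x ∂ν, x 0 ≠ i → φ x = 0 := by
  have h : ∀ᵐ x ∂ν.map (prepend i), x 0 = i :=
    (ae_map_iff (measurable_prepend i).aemeasurable (measurableSet_eq_fun (measurable_pi_apply 0)
      measurable_const)).2 (ae_of_all _ fun _ => rfl)
  rw [hφ.map_prepend, ae_withDensity_iff' (hφ.aestronglyMeasurable.enorm.pow_const 2)] at h
  filter_upwards [h] with x hx h₀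
  by_contra hφx
  exact h₀ (hx (by simpa using hφx))

theorem map_prepend_absolutelyContinuous (hφ : IsMonicFilter ν i φ) :
    ν.map (prepend i) ≪ ν :=
  hφ.map_prepend ▸ withDensity_absolutelyContinuous _ _

theorem ae_comp_prepend (hφ : IsMonicFilter ν i φ) {P : Word N → Prop}
    (h : ∀ᵐ x ∂ν, P x) :
    ∀ᵐ y ∂ν, P (prepend i y) :=
  ae_of_ae_map (measurable_prepend i).aemeasurable (hφ.map_prepend_absolutelyContinuous.ae_le h)

theorem ae_vanishOff_cyl_cons (hφ : IsMonicFilter ν i φ) {w : List (Fin N)} {g : Word N → ℂ}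
    (hg : ∀ᵐ x ∂ν, x ∉ cyl w → g x = 0) :
    ∀ᵐ x ∂ν, x ∉ cyl (i :: w) → φ x * g (shift x) = 0 := by
  have hind : (cyl w)ᶜ.indicator g =ᵐ[ν] 0 := by
    filter_upwards [hg] with x hx
    by_cases hxw : x ∈ cyl w <;> simp [hxw, hx]
  filter_upwards [hφ.mul_comp_shift_ae_eq hind, hφ.ae_eq_zero_of_ne] with x h₁ h₂ hx
  by_cases h₀ : x 0 = i
  · have hsx : shift x ∈ (cyl w)ᶜ := fun h => hx (mem_cyl_cons.2 ⟨h₀, h⟩)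
    simpa [Set.indicator_of_mem hsx] using h₁
  · rw [h₂ h₀, zero_mul]

theorem exists_memLp_of_ae_vanishOff_cyl_cons (hφ : IsMonicFilter ν i φ)
    (hne : ∀ᵐ x ∂ν, x 0 = i → φ x ≠ 0) {w : List (Fin N)} {g : Word N → ℂ}
    (hg₂ : MemLp g 2 ν)
    (hg : ∀ᵐ x ∂ν, x ∉ cyl (i :: w) → g x = 0) :
    ∃ u : Word N → ℂ, MemLp u 2 ν ∧ (∀ᵐ x ∂ν, x ∉ cyl w → u x = 0) ∧
      g =ᵐ[ν] fun x => φ x * u (shift x) := by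
  have hdiv : AEStronglyMeasurable (fun x => g x / φ x) ν :=
    (hg₂.aestronglyMeasurable.aemeasurable.div
      hφ.aestronglyMeasurable.aemeasurable).aestronglyMeasurable
  refine ⟨fun y => g (prepend i y) / φ (prepend i y), ?_, ?_, ?_⟩
  · have hmap := hdiv.mono_ac hφ.map_prepend_absolutelyContinuous
    refine (memLp_map_measure_iff hmap (measurable_prepend i).aemeasurable).1 ?_
    rw [hφ.map_prepend] at hmap ⊢
    refine (memLp_two_withDensity_enorm_sq_iff hφ.aestronglyMeasurable hmap).2
      (hg₂.of_le (hφ.aestronglyMeasurable.mul hdiv) (ae_of_all _ fun x => ?_))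
    by_cases hφx : φ x = 0
    · simp [hφx]
    · rw [mul_div_cancel₀ _ hφx]
  · filter_upwards [hφ.ae_comp_prepend hg] with y hy hyw
    rw [hy (by simpa [mem_cyl_cons] using hyw), zero_div]
  · filter_upwards [hφ.ae_eq_zero_of_ne, hne, hg] with x h₁ h₂ h₃
    by_cases h₀ : x 0 = i
    · rw [prepend_shift h₀, mul_div_cancel₀ _ (h₂ h₀)]
    · rw [h₁ h₀, zero_mul, h₃ fun hx => h₀ (mem_cyl_cons.1 hx).1]

end IsMonicFilter

/-- `S` is the representation on `L²(ν)` attached to the filters `f`. -/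
structure IsMonicRep (ν : Measure (Word N)) (f : Fin N → Word N → ℂ)
    (S : Fin N → (Lp ℂ 2 ν →L[ℂ] Lp ℂ 2 ν)) : Prop where
  filter : ∀ i, IsMonicFilter ν i (f i)
  coeFn_apply : ∀ i (g : Lp ℂ 2 ν), S i g =ᵐ[ν] fun x => f i x * g (shift x)

theorem IsMonicRep.coeFn_apply_const_one {ν : Measure (Word N)} [IsFiniteMeasure ν]
    {f : Fin N → Word N → ℂ} {S : Fin N → (Lp ℂ 2 ν →L[ℂ] Lp ℂ 2 ν)}
    (hS : IsMonicRep ν f S) (i : Fin N) : S i (Lp.const 2 ν 1) =ᵐ[ν] f i := by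
  filter_upwards [hS.coeFn_apply i _, (hS.filter i).mul_comp_shift_ae_eq (Lp.coeFn_const 2 ν 1)]
    with x h₁ h₂
  rw [h₁, h₂, Function.const_apply, mul_one]

section Intertwiners

variable {μ μ' : Measure (Word N)} {f f' : Fin N → Word N → ℂ}
  {S : Fin N → (Lp ℂ 2 μ →L[ℂ] Lp ℂ 2 μ)}
  {S' : Fin N → (Lp ℂ 2 μ' →L[ℂ] Lp ℂ 2 μ')}

theorem ae_vanishOff_cyl_map_of_intertwines (hS : IsMonicRep μ f S) (hS' : IsMonicRep μ' f' S')
    (hne' : ∀ i, ∀ᵐ x ∂μ', x 0 = i → f' i x ≠ 0)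
    (W : Lp ℂ 2 μ' →ₗᵢ[ℂ] Lp ℂ 2 μ) (hW : ∀ i g, S i (W g) = W (S' i g))
    (w : List (Fin N)) {g : Lp ℂ 2 μ'} (hg : ∀ᵐ x ∂μ', x ∉ cyl w → g x = 0) :
    ∀ᵐ x ∂μ, x ∉ cyl w → W g x = 0 := by
  induction w generalizing g with
  | nil => exact ae_of_all _ fun x hx => by simp at hx
  | cons i w ih =>
    obtain ⟨u, hu₂, huw, hgu⟩ :=
      (hS'.filter i).exists_memLp_of_ae_vanishOff_cyl_cons (hne' i) (Lp.memLp g) hg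
    have hg' : g = S' i (hu₂.toLp u) := Lp.ext <| hgu.trans <|
      ((hS'.filter i).mul_comp_shift_ae_eq hu₂.coeFn_toLp).symm.trans (hS'.coeFn_apply i _).symm
    have hWu := ih (g := hu₂.toLp u) (by
      filter_upwards [hu₂.coeFn_toLp, huw] with x h₁ h₂ hx
      rw [h₁, h₂ hx])
    rw [hg', ← hW]
    filter_upwards [hS.coeFn_apply i (W (hu₂.toLp u)), (hS.filter i).ae_vanishOff_cyl_cons hWu]
      with x h₁ h₂ hx
    rw [h₁, h₂ hx]

theorem map_indicatorConstLp_cyl_ae_eq [IsFiniteMeasure μ'] (hS : IsMonicRep μ f S)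
    (hS' : IsMonicRep μ' f' S') (hne' : ∀ i, ∀ᵐ x ∂μ', x 0 = i → f' i x ≠ 0)
    (W : Lp ℂ 2 μ' →ₗᵢ[ℂ] Lp ℂ 2 μ) (hW : ∀ i g, S i (W g) = W (S' i g))
    {h : Word N → ℂ} (hWh : W (Lp.const 2 μ' 1) =ᵐ[μ] h)
    (s : Set (Word N)) (hs : MeasurableSet s) (hsC : s ∈ Set.range cyl) :
    W (indicatorConstLp 2 hs (measure_ne_top μ' _) 1) =ᵐ[μ] s.indicator h := by
  obtain ⟨w, rfl⟩ := hsC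
  have hp : Measurable fun (x : Word N) (k : Fin w.length) => x k :=
    measurable_pi_lambda _ fun k => measurable_pi_apply _
  -- cylinders of length `n` are the fibres of the restriction to the first `n` letters
  have key := map_indicatorConstLp_ae_eq_of_fibers hp W (fun v g hg => by
    simpa [cyl_ofFn] using ae_vanishOff_cyl_map_of_intertwines hS hS' hne' W hW
      (List.ofFn v) (g := g) (by simpa [cyl_ofFn] using hg)) w.get
  revert hs
  rw [cyl_eq_preimage]
  intro hs
  filter_upwards [key, hWh] with x h₁ h₂
  rw [h₁]
  by_cases hx : x ∈ (fun (x : Word N) (k : Fin w.length) => x k) ⁻¹' {w.get}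
  · rw [Set.indicator_of_mem hx, Set.indicator_of_mem hx, h₂]
  · rw [Set.indicator_of_notMem hx, Set.indicator_of_notMem hx]

theorem exists_density_of_intertwines [IsFiniteMeasure μ] [IsFiniteMeasure μ']
    (hS : IsMonicRep μ f S) (hS' : IsMonicRep μ' f' S')
    (hne' : ∀ i, ∀ᵐ x ∂μ', x 0 = i → f' i x ≠ 0)
    (W : Lp ℂ 2 μ' ≃ₗᵢ[ℂ] Lp ℂ 2 μ) (hW : ∀ i g, S i (W g) = W (S' i g)) :
    μ ≪ μ' ∧ ∃ h : Word N → ℂ, Measurable h ∧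
      μ' = μ.withDensity (fun x => ‖h x‖ₑ ^ 2) ∧
      ∀ i, f' i =ᵐ[μ] fun x => h (shift x) / h x * f i x := by
  set one : Lp ℂ 2 μ' := Lp.const 2 μ' 1
  obtain ⟨h, hh, hWone⟩ : ∃ h : Word N → ℂ, Measurable h ∧ W one =ᵐ[μ] h :=
    ⟨_, (Lp.aestronglyMeasurable _).stronglyMeasurable_mk.measurable,
      (Lp.aestronglyMeasurable _).ae_eq_mk⟩
  have hcyl := map_indicatorConstLp_cyl_ae_eq hS hS' hne' W.toLinearIsometry hW hWone
  have hS'one := hS'.coeFn_apply_const_one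
  have hden := eq_withDensity_of_map_indicatorConstLp eq_generateFrom_range_cyl
    isPiSystem_range_cyl ⟨[], cyl_nil⟩ W.toLinearIsometry hcyl
  subst hden
  have hWmul := eq_withDensityMulLI_of_map_indicatorConstLp eq_generateFrom_range_cyl
    isPiSystem_range_cyl ⟨[], cyl_nil⟩ hh.aestronglyMeasurable W.toLinearIsometry hcyl
  have hh₀ : ∀ᵐ x ∂μ, h x ≠ 0 :=
    ae_ne_zero_of_surjective_withDensityMulLI _ (by rw [← hWmul]; exact W.surjective)
  refine ⟨withDensity_absolutelyContinuous' (hh.enorm.pow_const 2).aemeasurable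
    (by simpa using hh₀), h, hh, rfl, fun i => ?_⟩
  have hWS : W (S' i one) = withDensityMulLI hh.aestronglyMeasurable (S' i one) := by
    rw [← hWmul]; rfl
  filter_upwards [coeFn_withDensityMulLI hh.aestronglyMeasurable (S' i one),
    mul_ae_eq_mul_of_ae_eq_withDensity hh.aestronglyMeasurable (hS'one i),
    hS.coeFn_apply i (W one), (hS.filter i).mul_comp_shift_ae_eq hWone, hh₀]
    with x h₁ h₂ h₃ h₄ hx₀
  rw [← hWS, ← hW, h₃, h₄] at h₁
  rw [← h₁] at h₂
  field_simp
  linear_combination -h₂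

theorem exists_intertwines_of_density (hS : IsMonicRep μ f S)
    (hS' : ∀ i (g : Lp ℂ 2 μ'), S' i g =ᵐ[μ'] fun x => f' i x * g (shift x))
    {h : Word N → ℂ} (hh : Measurable h) (hden : μ' = μ.withDensity fun x => ‖h x‖ₑ ^ 2)
    (hac : μ ≪ μ') (hff' : ∀ i, f' i =ᵐ[μ] fun x => h (shift x) / h x * f i x) :
    ∃ W : Lp ℂ 2 μ' ≃ₗᵢ[ℂ] Lp ℂ 2 μ, ∀ i g, S i (W g) = W (S' i g) := by
  subst hden
  have hh₀ := ae_ne_zero_of_absolutelyContinuous_withDensity hh.aestronglyMeasurable hac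
  refine ⟨.ofSurjective _ (withDensityMulLI_surjective hh.aestronglyMeasurable hh₀),
    fun i g => Lp.ext ?_⟩
  filter_upwards [hS.coeFn_apply i _,
    (hS.filter i).mul_comp_shift_ae_eq (coeFn_withDensityMulLI hh.aestronglyMeasurable g),
    coeFn_withDensityMulLI hh.aestronglyMeasurable (S' i g),
    mul_ae_eq_mul_of_ae_eq_withDensity hh.aestronglyMeasurable (hS' i g), hff' i, hh₀]
    with x h₁ h₂ h₃ h₄ h₅ hx₀
  simp only [LinearIsometryEquiv.coe_ofSurjective] at h₁ ⊢
  rw [h₁, h₂, h₃, h₄, h₅]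
  field_simp

end Intertwiners

end Words

theorem monicSystem_equivalence_iff_general {N : ℕ}
    (μ μ' : Measure (Word N)) [IsFiniteMeasure μ] [IsFiniteMeasure μ']
    (f f' : Fin N → Word N → ℂ)
    (hf2 : ∀ i, MemLp (f i) 2 μ) (hf2' : ∀ i, MemLp (f' i) 2 μ')
    (hac : ∀ i, μ.map (prepend i) ≪ μ) (hac' : ∀ i, μ'.map (prepend i) ≪ μ')
    (hrn : ∀ i, (μ.map (prepend i)).rnDeriv μ =ᵐ[μ]
      fun x => ENNReal.ofReal (‖f i x‖ ^ 2))
    (hrn' : ∀ i, (μ'.map (prepend i)).rnDeriv μ' =ᵐ[μ']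
      fun x => ENNReal.ofReal (‖f' i x‖ ^ 2))
    (hne' : ∀ i, ∀ᵐ x ∂μ', x 0 = i → f' i x ≠ 0)
    (S : Fin N → (Lp ℂ 2 μ →L[ℂ] Lp ℂ 2 μ))
    (S' : Fin N → (Lp ℂ 2 μ' →L[ℂ] Lp ℂ 2 μ'))
    (hS : ∀ i (g : Lp ℂ 2 μ), ⇑(S i g) =ᵐ[μ] fun x => f i x * g (shift x))
    (hS' : ∀ i (g : Lp ℂ 2 μ'), ⇑(S' i g) =ᵐ[μ'] fun x => f' i x * g (shift x)) :
    (∃ W : Lp ℂ 2 μ' ≃ₗᵢ[ℂ] Lp ℂ 2 μ, ∀ i g, S i (W g) = W (S' i g)) ↔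
      (μ ≪ μ' ∧ μ' ≪ μ ∧
        ∃ h : Word N → ℂ, Measurable h ∧
          (μ'.rnDeriv μ =ᵐ[μ] fun x => ENNReal.ofReal (‖h x‖ ^ 2)) ∧
          ∀ i, f' i =ᵐ[μ] fun x => h (shift x) / h x * f i x) := by
  have hR : IsMonicRep μ f S :=
    ⟨fun i => .of_rnDeriv (hf2 i).aestronglyMeasurable (hac i) (hrn i), hS⟩
  have hR' : IsMonicRep μ' f' S' :=
    ⟨fun i => .of_rnDeriv (hf2' i).aestronglyMeasurable (hac' i) (hrn' i), hS'⟩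
  constructor
  · rintro ⟨W, hW⟩
    obtain ⟨hμμ', h, hh, hden, hff'⟩ := exists_density_of_intertwines hR hR' hne' W hW
    refine ⟨hμμ', hden ▸ withDensity_absolutelyContinuous _ _, h, hh, ?_, hff'⟩
    rw [hden]
    filter_upwards [Measure.rnDeriv_withDensity μ (hh.enorm.pow_const 2)] with x hx
    rw [hx, ofReal_norm_sq]
  · rintro ⟨hμμ', hμ'μ, h, hh, hrnh, hff'⟩
    exact exists_intertwines_of_density hR hS' hh
      (eq_withDensity_enorm_sq_of_rnDeriv hμ'μ hrnh) hμμ' hff'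

theorem monicSystem_equivalence_iff {N : ℕ} (hN : 2 ≤ N)
    (μ μ' : Measure (Word N)) [IsFiniteMeasure μ] [IsFiniteMeasure μ']
    (f f' : Fin N → Word N → ℂ)
    (hf2 : ∀ i, MemLp (f i) 2 μ) (hf2' : ∀ i, MemLp (f' i) 2 μ')
    (hac : ∀ i, μ.map (prepend i) ≪ μ) (hac' : ∀ i, μ'.map (prepend i) ≪ μ')
    (hrn : ∀ i, (μ.map (prepend i)).rnDeriv μ =ᵐ[μ]
      fun x => ENNReal.ofReal (‖f i x‖ ^ 2))
    (hrn' : ∀ i, (μ'.map (prepend i)).rnDeriv μ' =ᵐ[μ']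
      fun x => ENNReal.ofReal (‖f' i x‖ ^ 2))
    (hne : ∀ i, ∀ᵐ x ∂μ, x 0 = i → f i x ≠ 0)
    (hne' : ∀ i, ∀ᵐ x ∂μ', x 0 = i → f' i x ≠ 0)
    (S : Fin N → (Lp ℂ 2 μ →L[ℂ] Lp ℂ 2 μ))
    (S' : Fin N → (Lp ℂ 2 μ' →L[ℂ] Lp ℂ 2 μ'))
    (hS : ∀ i (g : Lp ℂ 2 μ), ⇑(S i g) =ᵐ[μ] fun x => f i x * g (shift x))
    (hS' : ∀ i (g : Lp ℂ 2 μ'), ⇑(S' i g) =ᵐ[μ'] fun x => f' i x * g (shift x)) :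
    (∃ W : Lp ℂ 2 μ' ≃ₗᵢ[ℂ] Lp ℂ 2 μ, ∀ i g, S i (W g) = W (S' i g)) ↔
      (μ ≪ μ' ∧ μ' ≪ μ ∧
        ∃ h : Word N → ℂ, Measurable h ∧
          (μ'.rnDeriv μ =ᵐ[μ] fun x => ENNReal.ofReal (‖h x‖ ^ 2)) ∧
          ∀ i, f' i =ᵐ[μ] fun x => h (shift x) / h x * f i x) :=
  monicSystem_equivalence_iff_general μ μ' f f' hf2 hf2' hac hac' hrn hrn' hne' S S' hS hS'
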